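/- arXiv:2509.22969 — 3 statements merged into one kernel-verified Lean document; each statement's English description precedes it below -/
import Mathlib

section
/- Let T = [0,1] be cut into finitely many pairwise disjoint intervals T₁, …, T_M whose union is T, let σ be the sigmoid function, and let c₁, …, c_M : ℝ^s → ℝ be continuous. Define f_c : ℝ^s → L²(T, ℝ) by f_c(x)(t) = Σ_{j=1}^M c_j(x) 1_{T_j}(t). Then for every compact set E ⊆ ℝ^s and every ε > 0 there exist m ∈ ℕ and weight and bias functions W¹ : T → ℝ^{m×s}, b : T → ℝ^m, W² : T → ℝ^{1×m} that are constant on each interval T_j, such that the network output D(x)(t) = W²(t) σ(W¹(t) x + b(t)) satisfies sup_{x ∈ E} ‖D(x) − f_c(x)‖_{L²(T,ℝ)} < ε. -/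
/-!
By Stone–Weierstrass, the functions `x ↦ exp (w ⬝ᵥ x)` span a dense subspace of `C(K, ℝ)` for
compact `K ⊆ ℝ^s`: they are closed under multiplication and separate points. Each exponential is
in turn a uniform limit of rescaled sigmoid neurons on `u ≤ R`, since
`exp (-b) * σ (u + b) = eᵘ / (1 + e^(u + b)) → eᵘ` as `b → -∞`. So every `c j` is within `ε / 2`
of a sigmoid network on `E`. Stacking these networks, and switching on for `t ∈ T j` only the
output weights of the `j`-th one, gives piecewise constant weights whose output is within `ε / 2`
of `f_c x` at every `t ∈ [0, 1]`, hence in `L²([0, 1])`.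
-/

open MeasureTheory

noncomputable def sigmoid (x : ℝ) : ℝ := 1 / (1 + Real.exp (-x))

open Matrix Function
open Real hiding sigmoid

noncomputable def expDotHom (s : ℕ) : Multiplicative (Fin s → ℝ) →* C(Fin s → ℝ, ℝ) where
  toFun w := ⟨fun x => exp (w.toAdd ⬝ᵥ x), by fun_prop⟩
  map_one' := by ext; simp
  map_mul' w w' := by ext; simp [add_dotProduct, exp_add]

@[simp]
theorem expDotHom_apply {s : ℕ} (w : Multiplicative (Fin s → ℝ)) (x : Fin s → ℝ) :
    expDotHom s w x = exp (w.toAdd ⬝ᵥ x) := rfl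

theorem separatesPoints_adjoin_mrange_expDotHom (s : ℕ) :
    (Algebra.adjoin ℝ (MonoidHom.mrange (expDotHom s) : Set C(Fin s → ℝ, ℝ))).SeparatesPoints := by
  intro x y hxy
  refine ⟨_, ⟨expDotHom s (.ofAdd (x - y)), Algebra.subset_adjoin ⟨_, rfl⟩, rfl⟩, ?_⟩
  simp only [expDotHom_apply, toAdd_ofAdd]
  rw [Ne, exp_eq_exp, ← sub_eq_zero, ← dotProduct_sub]
  exact mt dotProduct_self_eq_zero.mp (sub_ne_zero.mpr hxy)

theorem exists_sum_exp_dotProduct_near {s : ℕ} (f : C(Fin s → ℝ, ℝ)) {K : Set (Fin s → ℝ)}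
    (hK : IsCompact K) {ε : ℝ} (hε : 0 < ε) :
    ∃ (n : ℕ) (w : Fin n → Fin s → ℝ) (α : Fin n → ℝ),
      ∀ x ∈ K, |∑ q, α q * exp (w q ⬝ᵥ x) - f x| < ε := by
  obtain ⟨g, hgA, hg⟩ :=
    ContinuousMap.exists_mem_subalgebra_near_continuous_of_isCompact_of_separatesPoints
      (separatesPoints_adjoin_mrange_expDotHom s) f hK hε
  have hg_span : g ∈ Submodule.span ℝ (MonoidHom.mrange (expDotHom s) : Set C(Fin s → ℝ, ℝ)) := by
    rwa [← Submonoid.closure_eq (MonoidHom.mrange _), ← Algebra.adjoin_eq_span]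
  obtain ⟨n, α, v, rfl⟩ := Submodule.mem_span_set'.mp hg_span
  choose w hw using fun q => (v q).2
  refine ⟨n, fun q => (w q).toAdd, α, fun x hx => ?_⟩
  simpa [← hw] using hg x hx

theorem abs_exp_neg_mul_sigmoid_add_sub_exp_le (u b : ℝ) :
    |exp (-b) * sigmoid (u + b) - exp u| ≤ exp (2 * u + b) := by
  have key : exp (-b) * sigmoid (u + b) - exp u = -(exp (2 * u + b) / (1 + exp (u + b))) := by
    have : exp (2 * u + b) = exp u * exp (u + b) := by rw [← exp_add]; ring_nf
    rw [sigmoid, this, exp_neg, exp_neg, exp_add u b]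
    field_simp
    ring
  rw [key, abs_neg, abs_of_pos (by positivity)]
  exact div_le_self (exp_pos _).le (by linarith [exp_pos (u + b)])

theorem exists_sigmoid_sum_near {s : ℕ} (f : C(Fin s → ℝ, ℝ)) {K : Set (Fin s → ℝ)}
    (hK : IsCompact K) {ε : ℝ} (hε : 0 < ε) :
    ∃ (n : ℕ) (W : Matrix (Fin n) (Fin s) ℝ) (b a : Fin n → ℝ),
      ∀ x ∈ K, |∑ q, a q * sigmoid ((W *ᵥ x) q + b q) - f x| < ε := by
  obtain ⟨n, w, α, hα⟩ := exists_sum_exp_dotProduct_near f hK (half_pos hε)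
  obtain ⟨R, hR⟩ := hK.exists_bound_of_continuousOn (f := (of w *ᵥ ·)) (by fun_prop)
  set S := ∑ q, |α q|
  set δ := ε / 2 / (S + 1)
  have hδ : 0 < δ := by positivity
  have hSδ : S * δ < ε / 2 := by
    rw [mul_div_assoc', div_lt_iff₀ (by positivity)]
    nlinarith
  set b₀ := log δ - 2 * R
  refine ⟨n, of w, fun _ => b₀, fun q => α q * exp (-b₀), fun x hx => ?_⟩
  have hneuron : ∀ q, |exp (-b₀) * sigmoid (w q ⬝ᵥ x + b₀) - exp (w q ⬝ᵥ x)| ≤ δ := fun q =>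
    calc _ ≤ exp (2 * (w q ⬝ᵥ x) + b₀) := abs_exp_neg_mul_sigmoid_add_sub_exp_le _ _
      _ ≤ exp (2 * R + b₀) := by
          gcongr
          exact (le_abs_self _).trans ((norm_le_pi_norm (of w *ᵥ x) q).trans (hR x hx))
      _ = δ := by rw [add_sub_cancel, exp_log hδ]
  calc |∑ q, α q * exp (-b₀) * sigmoid ((of w *ᵥ x) q + b₀) - f x|
      ≤ ∑ q, |α q| * |exp (-b₀) * sigmoid (w q ⬝ᵥ x + b₀) - exp (w q ⬝ᵥ x)|
          + |∑ q, α q * exp (w q ⬝ᵥ x) - f x| := by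
        refine (abs_sub_le _ (∑ q, α q * exp (w q ⬝ᵥ x)) _).trans (add_le_add_left ?_ _)
        rw [← Finset.sum_sub_distrib]
        refine (Finset.abs_sum_le_sum_abs _ _).trans_eq (Finset.sum_congr rfl fun q _ => ?_)
        rw [← abs_mul, mul_sub, mul_assoc]
        rfl
    _ < S * δ + ε / 2 := by
        rw [Finset.sum_mul]
        exact add_lt_add_of_le_of_lt (Finset.sum_le_sum fun q _ =>
          mul_le_mul_of_nonneg_left (hneuron q) (abs_nonneg _)) (hα x hx)
    _ < ε := by linarith

theorem indicator_apply_eq_ite_of_pairwise_disjoint {ι α M : Type*} [DecidableEq ι] [Zero M]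
    {T : ι → Set α} (hT : Pairwise (Disjoint on T)) {t : α} {j : ι} (ht : t ∈ T j) (k : ι)
    (g : α → M) : (T k).indicator g t = if k = j then g t else 0 := by
  by_cases hkj : k = j
  · simp [hkj, ht]
  · simp [hkj, Set.disjoint_right.mp (hT hkj) ht]

theorem stmt_1_general (s : ℕ)
    (M : ℕ) (T : Fin M → Set ℝ)
    (hdisj : ∀ j k, j ≠ k → Disjoint (T j) (T k))
    (hunion : (⋃ j, T j) = Set.Icc (0:ℝ) 1)
    (c : Fin M → EuclideanSpace ℝ (Fin s) → ℝ) (hc : ∀ j, Continuous (c j))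
    (E : Set (EuclideanSpace ℝ (Fin s))) (hE : IsCompact E)
    (ε : ℝ) (hε : 0 < ε) :
    ∃ (m : ℕ) (W1 : ℝ → Matrix (Fin m) (Fin s) ℝ) (b : ℝ → Fin m → ℝ)
      (W2 : ℝ → Matrix (Fin 1) (Fin m) ℝ),
      (∀ j, ∀ t₁ ∈ T j, ∀ t₂ ∈ T j, W1 t₁ = W1 t₂ ∧ b t₁ = b t₂ ∧ W2 t₁ = W2 t₂) ∧
      ∀ x ∈ E,
        eLpNorm
          (fun t =>
            ((W2 t).mulVec fun q => sigmoid ((W1 t).mulVec (fun j => x j) q + b t q)) 0 -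
              ∑ j, c j x * (T j).indicator (fun _ => (1:ℝ)) t)
          2 (volume.restrict (Set.Icc (0:ℝ) 1)) < ENNReal.ofReal ε := by
  have hind {t j} (ht : t ∈ T j) := indicator_apply_eq_ite_of_pairwise_disjoint (M := ℝ) hdisj ht
  choose n W bias a hnet using fun j => exists_sigmoid_sum_near
    ⟨fun y => c j (WithLp.toLp 2 y), by fun_prop⟩ (hE.image (PiLp.continuous_ofLp 2 _))
    (half_pos hε)
  let e := (Fintype.equivFin ((j : Fin M) × Fin (n j))).symm
  refine ⟨_, fun _ => of fun q => W (e q).1 (e q).2, fun _ q => bias (e q).1 (e q).2,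
    fun t => of fun _ q => (T (e q).1).indicator (fun _ => a (e q).1 (e q).2) t,
    fun j t₁ h₁ t₂ h₂ => ⟨rfl, rfl, ?_⟩, fun x hx => ?_⟩
  · ext _ q
    simp only [of_apply, hind h₁, hind h₂]
  refine ((eLpNorm_le_of_ae_bound (C := ε / 2) ((ae_restrict_iff' measurableSet_Icc).mpr
    (.of_forall fun t ht => ?_))).trans_eq (by simp)).trans_lt
    ((ENNReal.ofReal_lt_ofReal_iff hε).mpr (half_lt_self hε))
  obtain ⟨j, htj⟩ := Set.mem_iUnion.mp (hunion ▸ ht)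
  simp only [mulVec, dotProduct, of_apply, hind htj]
  rw [e.sum_comp (fun p => (if p.1 = j then a p.1 p.2 else 0) *
    sigmoid (∑ i, W p.1 p.2 i * x.ofLp i + bias p.1 p.2)), Fintype.sum_sigma]
  simp only [ite_mul, zero_mul, Finset.sum_ite_irrel, Finset.sum_const_zero, Finset.sum_ite_eq',
    Finset.mem_univ, if_true, mul_ite, mul_one, mul_zero]
  exact (hnet j x.ofLp ⟨x, hx, rfl⟩).le

/-- Property 1 of the paper: continuous maps from `ℝ^s` into piecewise constant functions
over a finite interval partition of `[0,1]` can be uniformly approximated (on compact sets,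
in `L²([0,1],ℝ)` norm) by one-hidden-layer functional networks whose weight and bias
functions are constant on each interval of the partition. -/
theorem stmt_1 (s : ℕ) (hs : 1 ≤ s)
    (M : ℕ) (T : Fin M → Set ℝ)
    (hTint : ∀ j, (T j).OrdConnected)
    (hdisj : ∀ j k, j ≠ k → Disjoint (T j) (T k))
    (hunion : (⋃ j, T j) = Set.Icc (0:ℝ) 1)
    (c : Fin M → EuclideanSpace ℝ (Fin s) → ℝ) (hc : ∀ j, Continuous (c j))
    (E : Set (EuclideanSpace ℝ (Fin s))) (hE : IsCompact E)
    (ε : ℝ) (hε : 0 < ε) :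
    ∃ (m : ℕ) (W1 : ℝ → Matrix (Fin m) (Fin s) ℝ) (b : ℝ → Fin m → ℝ)
      (W2 : ℝ → Matrix (Fin 1) (Fin m) ℝ),
      (∀ j, ∀ t₁ ∈ T j, ∀ t₂ ∈ T j, W1 t₁ = W1 t₂ ∧ b t₁ = b t₂ ∧ W2 t₁ = W2 t₂) ∧
      ∀ x ∈ E,
        eLpNorm
          (fun t =>
            ((W2 t).mulVec fun q => sigmoid ((W1 t).mulVec (fun j => x j) q + b t q)) 0 -
              ∑ j, c j x * (T j).indicator (fun _ => (1:ℝ)) t)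
          2 (volume.restrict (Set.Icc (0:ℝ) 1)) < ENNReal.ofReal ε :=
  stmt_1_general s M T hdisj hunion c hc E hE ε hε
end

section
/- Let n ≥ 1, x ∈ ℝ^n, and suppose s_{ij} > 0 for all 1 ≤ i < j ≤ n. Then there exists λ₀ ≥ 0 such that for every λ ≥ λ₀ the unique minimizer over u ∈ ℝ^n of the convex clustering objective L₁(u) = (1/n) ‖x − u‖² + λ Σ_{1≤i<j≤n} s_{ij} |u_i − u_j| is the constant vector u = (x̄, …, x̄), where x̄ = (1/n) Σ_{i=1}^n x_i. -/
/-!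
Write `m` for the mean of `x`. Expanding the square around `m`,
`L₁(u) - L₁(m) = (1/n) ∑ (uᵢ - m)² - (2/n) ∑ (xᵢ - m)(uᵢ - m) + λ P(u)`, with `P` the fusion penalty.
Since `∑ (xᵢ - m) = 0`, the cross term does not change when `m` is replaced by `u₀`, and then
`|(xⱼ - m)(uⱼ - u₀)| ≤ |xⱼ - m| |u₀ - uⱼ|` is dominated by the `(0, j)` term `λ s₀ⱼ |u₀ - uⱼ|` of `λ P(u)`
once `λ ≥ ∑ⱼ 2 |xⱼ - m| / (n s₀ⱼ)`. Hence `L₁(u) ≥ L₁(m) + (1/n) ∑ (uᵢ - m)²`.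
-/

/-- The per-coordinate convex clustering objective of the paper:
`L₁(u) = (1/n) ‖x − u‖² + λ Σ_{i<j} s_{ij} |u_i − u_j|`. -/
noncomputable def convexClusterObj (n : ℕ) (x : Fin n → ℝ) (s : Fin n → Fin n → ℝ)
    (lam : ℝ) (u : Fin n → ℝ) : ℝ :=
  (1 / n) * (∑ i, (x i - u i) ^ 2) +
    lam * ∑ i, ∑ j, if i < j then s i j * |u i - u j| else 0

open Finset

section FusionPenalty

variable {ι : Type*} [Fintype ι] [LinearOrder ι]

def fusionPenalty (s : ι → ι → ℝ) (u : ι → ℝ) : ℝ :=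
  ∑ i, ∑ j, if i < j then s i j * |u i - u j| else 0

lemma fusionPenalty_const (s : ι → ι → ℝ) (c : ℝ) : fusionPenalty s (fun _ => c) = 0 := by
  simp [fusionPenalty]

lemma row_le_fusionPenalty {s : ι → ι → ℝ} (hs : ∀ i j, i < j → 0 ≤ s i j) (u : ι → ℝ)
    (k : ι) : (∑ j, if k < j then s k j * |u k - u j| else 0) ≤ fusionPenalty s u := by
  refine single_le_sum (f := fun i => ∑ j, if i < j then s i j * |u i - u j| else 0)
    (fun i _ => sum_nonneg fun j _ => ?_) (mem_univ k)
  split_ifs with h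
  · exact mul_nonneg (hs i j h) (abs_nonneg _)
  · exact le_rfl

lemma sum_mul_sub_le_fusionPenalty {s : ι → ι → ℝ} {y : ι → ℝ} {lam : ℝ} {k : ι}
    (hs : ∀ i j, i < j → 0 ≤ s i j) (hlam : 0 ≤ lam) (hk : ∀ j, k ≤ j) (hy : ∑ j, y j = 0)
    (hys : ∀ j, k < j → |y j| ≤ lam * s k j) (u : ι → ℝ) (c : ℝ) :
    ∑ j, y j * (u j - c) ≤ lam * fusionPenalty s u := by
  have hshift : ∑ j, y j * (u j - c) = ∑ j, y j * (u j - u k) := by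
    simp only [mul_sub, sum_sub_distrib, ← sum_mul, hy, zero_mul]
  have hterm : ∀ j, y j * (u j - u k) ≤ if k < j then lam * (s k j * |u k - u j|) else 0 := by
    intro j
    split_ifs with h
    · calc y j * (u j - u k) ≤ |y j| * |u k - u j| := by
            rw [abs_sub_comm, ← abs_mul]; exact le_abs_self _
        _ ≤ lam * (s k j * |u k - u j|) := by
            rw [← mul_assoc]; exact mul_le_mul_of_nonneg_right (hys j h) (abs_nonneg _)
    · rw [le_antisymm (hk j) (not_lt.mp h), sub_self, mul_zero]
  calc ∑ j, y j * (u j - c) = ∑ j, y j * (u j - u k) := hshift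
    _ ≤ ∑ j, if k < j then lam * (s k j * |u k - u j|) else 0 := sum_le_sum fun j _ => hterm j
    _ = lam * ∑ j, if k < j then s k j * |u k - u j| else 0 := by
        simp only [mul_sum, mul_ite, mul_zero]
    _ ≤ lam * fusionPenalty s u := mul_le_mul_of_nonneg_left (row_le_fusionPenalty hs u k) hlam

end FusionPenalty

lemma exists_forall_abs_le_mul {α : Type*} (t : Finset α) (y w : α → ℝ)
    (hw : ∀ j ∈ t, 0 < w j) :
    ∃ lam₀, 0 ≤ lam₀ ∧ ∀ lam, lam₀ ≤ lam → ∀ j ∈ t, |y j| ≤ lam * w j := by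
  have hnonneg : ∀ j ∈ t, 0 ≤ |y j| / w j := fun j hj => div_nonneg (abs_nonneg _) (hw j hj).le
  refine ⟨∑ j ∈ t, |y j| / w j, sum_nonneg hnonneg, fun lam hlam j hj => ?_⟩
  rw [← div_le_iff₀ (hw j hj)]
  exact (single_le_sum hnonneg hj).trans hlam

lemma sum_sub_mean_eq_zero {ι : Type*} [Fintype ι] [Nonempty ι] (x : ι → ℝ) :
    ∑ i, (x i - (Fintype.card ι : ℝ)⁻¹ * ∑ j, x j) = 0 := by
  simp [sum_sub_distrib]

lemma convexClusterObj_eq (n : ℕ) (x : Fin n → ℝ) (s : Fin n → Fin n → ℝ) (lam : ℝ)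
    (u : Fin n → ℝ) :
    convexClusterObj n x s lam u = 1 / n * ∑ i, (x i - u i) ^ 2 + lam * fusionPenalty s u :=
  rfl

lemma convexClusterObj_const_add_le {n : ℕ} {x : Fin n → ℝ} {s : Fin n → Fin n → ℝ}
    {lam m : ℝ} {k : Fin n} (hs : ∀ i j, i < j → 0 ≤ s i j) (hlam : 0 ≤ lam) (hk : ∀ j, k ≤ j)
    (hm : ∑ i, (x i - m) = 0) (hx : ∀ j, k < j → |2 / n * (x j - m)| ≤ lam * s k j)
    (u : Fin n → ℝ) :
    convexClusterObj n x s lam (fun _ => m) + 1 / n * ∑ i, (u i - m) ^ 2 ≤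
      convexClusterObj n x s lam u := by
  have hsq : ∑ i, (x i - u i) ^ 2 =
      ∑ i, (x i - m) ^ 2 + ∑ i, (u i - m) ^ 2 - 2 * ∑ i, (x i - m) * (u i - m) := by
    rw [mul_sum, ← sum_add_distrib, ← sum_sub_distrib]
    exact sum_congr rfl fun i _ => by ring
  have hcross : 2 / n * ∑ i, (x i - m) * (u i - m) ≤ lam * fusionPenalty s u := by
    have hy : ∑ j, 2 / n * (x j - m) = 0 := by rw [← mul_sum, hm, mul_zero]
    simpa only [mul_sum, mul_assoc] using sum_mul_sub_le_fusionPenalty hs hlam hk hy hx u m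
  rw [convexClusterObj_eq, convexClusterObj_eq, fusionPenalty_const, hsq]
  linarith [show 1 / (n : ℝ) * (2 * ∑ i, (x i - m) * (u i - m)) =
    2 / n * ∑ i, (x i - m) * (u i - m) by ring]

/-- With strictly positive similarity weights, for all sufficiently large `λ` the unique
minimizer of the convex clustering objective is the constant vector at the overall mean:
all cluster centroids coalesce into a single cluster. -/
theorem stmt_6 (n : ℕ) (hn : 1 ≤ n) (x : Fin n → ℝ)
    (s : Fin n → Fin n → ℝ) (hs : ∀ i j, i < j → 0 < s i j) :
    ∃ lam₀ : ℝ, 0 ≤ lam₀ ∧ ∀ lam : ℝ, lam₀ ≤ lam →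
      (∀ v : Fin n → ℝ,
        convexClusterObj n x s lam (fun _ => (n : ℝ)⁻¹ * ∑ i, x i) ≤
          convexClusterObj n x s lam v) ∧
      (∀ u : Fin n → ℝ,
        (∀ v : Fin n → ℝ, convexClusterObj n x s lam u ≤ convexClusterObj n x s lam v) →
          u = fun _ => (n : ℝ)⁻¹ * ∑ i, x i) := by
  set m := (n : ℝ)⁻¹ * ∑ i, x i
  let k : Fin n := ⟨0, hn⟩
  have hk : ∀ j, k ≤ j := fun j => Fin.mk_le_of_le_val (Nat.zero_le _)
  have hm : ∑ i, (x i - m) = 0 := by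
    have : Nonempty (Fin n) := ⟨k⟩
    simpa using sum_sub_mean_eq_zero x
  obtain ⟨lam₀, hlam₀, hthreshold⟩ := exists_forall_abs_le_mul (Ioi k)
    (fun j => 2 / n * (x j - m)) (s k) fun j hj => hs k j (mem_Ioi.mp hj)
  refine ⟨lam₀, hlam₀, fun lam hlam => ?_⟩
  have key := convexClusterObj_const_add_le (fun i j h => (hs i j h).le) (hlam₀.trans hlam) hk
    hm fun j hj => hthreshold lam hlam j (mem_Ioi.mpr hj)
  have hdist_nonneg : ∀ u : Fin n → ℝ, 0 ≤ 1 / (n : ℝ) * ∑ i, (u i - m) ^ 2 := fun u =>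
    mul_nonneg (by positivity) (sum_nonneg fun i _ => sq_nonneg _)
  refine ⟨fun v => le_of_add_le_of_nonneg_left (key v) (hdist_nonneg v), fun u hu => ?_⟩
  have hdist_zero : 1 / (n : ℝ) * ∑ i, (u i - m) ^ 2 = 0 :=
    le_antisymm (by linarith [key u, hu fun _ => m]) (hdist_nonneg u)
  have hsum_zero : ∑ i, (u i - m) ^ 2 = 0 :=
    (mul_eq_zero.mp hdist_zero).resolve_left (by positivity)
  funext i
  exact sub_eq_zero.mp (pow_eq_zero_iff two_ne_zero |>.mp
    ((sum_eq_zero_iff_of_nonneg fun j _ => sq_nonneg _).mp hsum_zero i (mem_univ i)))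
end

section
/- Let y : [0,1] → ℝ^p be continuously differentiable and let h : [0,1] → [0,1] be continuously differentiable with h(0) = 0, h(1) = 1 and h'(t) > 0 for all t ∈ [0,1]. Define the square-root velocity transform SRV(y)(t) = y'(t)/√(‖y'(t)‖) if ‖y'(t)‖ ≠ 0 and SRV(y)(t) = 0 otherwise, where ‖·‖ is the Euclidean norm on ℝ^p. Then for every t ∈ [0,1], SRV(y ∘ h)(t) = SRV(y)(h(t)) · √(h'(t)). -/
/-- Pointwise square-root velocity map: `srv v = v / √‖v‖` if `v ≠ 0`, else `0`.
The SRV representation of a curve `y` is `t ↦ srv (y'(t))`. -/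
noncomputable def srv {p : ℕ} (v : EuclideanSpace ℝ (Fin p)) : EuclideanSpace ℝ (Fin p) :=
  if ‖v‖ = 0 then 0 else (Real.sqrt ‖v‖)⁻¹ • v

theorem srv_smul_of_pos {p : ℕ} {c : ℝ} (hc : 0 < c) (v : EuclideanSpace ℝ (Fin p)) :
    srv (c • v) = Real.sqrt c • srv v := by
  have hnorm : ‖c • v‖ = c * ‖v‖ := by rw [norm_smul, Real.norm_of_nonneg hc.le]
  unfold srv
  simp only [hnorm, mul_eq_zero, hc.ne', false_or]
  split_ifs
  · rw [smul_zero]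
  · have hsc : Real.sqrt c ≠ 0 := Real.sqrt_ne_zero'.2 hc
    rw [Real.sqrt_mul hc.le, smul_smul, smul_smul]
    congr 1
    field_simp
    rw [Real.sq_sqrt hc.le]

theorem stmt_11_general (p : ℕ) (y y' : ℝ → EuclideanSpace ℝ (Fin p)) (h h' : ℝ → ℝ)
    (hy : ∀ t ∈ Set.Icc (0:ℝ) 1, HasDerivWithinAt y (y' t) (Set.Icc (0:ℝ) 1) t)
    (hmaps : Set.MapsTo h (Set.Icc (0:ℝ) 1) (Set.Icc (0:ℝ) 1))
    (hh : ∀ t ∈ Set.Icc (0:ℝ) 1, HasDerivWithinAt h (h' t) (Set.Icc (0:ℝ) 1) t)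
    (hpos : ∀ t ∈ Set.Icc (0:ℝ) 1, 0 < h' t)
    (g' : ℝ → EuclideanSpace ℝ (Fin p))
    (hg : ∀ t ∈ Set.Icc (0:ℝ) 1, HasDerivWithinAt (y ∘ h) (g' t) (Set.Icc (0:ℝ) 1) t) :
    ∀ t ∈ Set.Icc (0:ℝ) 1, srv (g' t) = Real.sqrt (h' t) • srv (y' (h t)) := by
  intro t ht
  have hchain : HasDerivWithinAt (y ∘ h) (h' t • y' (h t)) (Set.Icc (0:ℝ) 1) t :=
    (hy (h t) (hmaps ht)).scomp t (hh t ht) hmaps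
  have hg_eq : g' t = h' t • y' (h t) :=
    (uniqueDiffOn_Icc zero_lt_one t ht).eq_deriv _ (hg t ht) hchain
  rw [hg_eq, srv_smul_of_pos (hpos t ht)]

/-- Transformation rule of the square-root velocity representation under
re-parameterization by an orientation-preserving diffeomorphism `h` of `[0,1]`:
`SRV(y ∘ h)(t) = SRV(y)(h(t)) √(h'(t))`. -/
theorem stmt_11 (p : ℕ) (y y' : ℝ → EuclideanSpace ℝ (Fin p)) (h h' : ℝ → ℝ)
    (hy : ∀ t ∈ Set.Icc (0:ℝ) 1, HasDerivWithinAt y (y' t) (Set.Icc (0:ℝ) 1) t)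
    (hy'c : ContinuousOn y' (Set.Icc (0:ℝ) 1))
    (hmaps : Set.MapsTo h (Set.Icc (0:ℝ) 1) (Set.Icc (0:ℝ) 1))
    (hh : ∀ t ∈ Set.Icc (0:ℝ) 1, HasDerivWithinAt h (h' t) (Set.Icc (0:ℝ) 1) t)
    (hh'c : ContinuousOn h' (Set.Icc (0:ℝ) 1))
    (h0 : h 0 = 0) (h1 : h 1 = 1) (hpos : ∀ t ∈ Set.Icc (0:ℝ) 1, 0 < h' t)
    (g' : ℝ → EuclideanSpace ℝ (Fin p))
    (hg : ∀ t ∈ Set.Icc (0:ℝ) 1, HasDerivWithinAt (y ∘ h) (g' t) (Set.Icc (0:ℝ) 1) t) :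
    ∀ t ∈ Set.Icc (0:ℝ) 1, srv (g' t) = Real.sqrt (h' t) • srv (y' (h t)) :=
  stmt_11_general p y y' h h' hy hmaps hh hpos g' hg
end
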